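/- There exists a constant C > 0 such that for every integer r ≥ 1 the following holds. Set n_r = 3·2^{2r−1} − 1, N_r = (4/9)(n_r + 1)² = 2^{4r}, s_r = 1/(2^r + 1), and T_r = N_r·( (N_r/2 − 1)(√(2 − 2 s_r) + √(2 + 2 s_r)) + 2 ). Then | T_r − √2·N_r² + N_r^{3/2}/(4√2) | ≤ C·N_r^{5/4}. (That is, the sum of distances of the spherical codes obtained from De Caen's equiangular line families satisfies T_r = √2·N_r² − N_r^{3/2}/(4√2) + O(N_r^{5/4}).) -/

import Mathlib

/-!
With `q = 2^r` and `s = 1/(q+1)` we have `N = q^4`, `N^{3/2} = q^6`, `N^{5/4} = q^5`, and the sum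
is `√2·q^4·((q^4/2 - 1)(√(1-s) + √(1+s)) + √2)`. The Taylor expansion
`√(1-s) + √(1+s) = 2 - s²/4 + O(s³)` turns this into `√2 q^8 - √2 q^8 s²/8 + O(q^5)`, and
`qs = 1 - s` gives `q^8 s² = q^6 + O(q^5)`, so the second-order term is
`-√2 q^6/8 = -N^{3/2}/(4√2)`.
-/

theorem abs_sqrt_one_sub_add_sqrt_one_add_sub_le {s : ℝ} (h0 : 0 ≤ s) (h1 : s ≤ 1) :
    |√(1 - s) + √(1 + s) - (2 - s ^ 2 / 4)| ≤ s ^ 3 := by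
  have hsq : (√(1 - s) + √(1 + s)) ^ 2 = 2 + 2 * √(1 - s ^ 2) := by
    rw [add_sq, Real.sq_sqrt (by linarith), Real.sq_sqrt (by linarith), mul_assoc,
      ← Real.sqrt_mul (by linarith)]
    ring_nf
  have hs2 : s ^ 2 ≤ 1 := pow_le_one₀ h0 h1
  have hprod_le : √(1 - s ^ 2) ≤ 1 - s ^ 2 / 2 :=
    (Real.sqrt_le_left (by linarith)).2 (by nlinarith)
  have hprod_ge : 1 - s ^ 2 / 2 - s ^ 4 / 2 ≤ √(1 - s ^ 2) :=
    (Real.le_sqrt (by nlinarith) (by linarith)).2 <| by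
      have h1s2 : 0 ≤ 1 - s ^ 2 := by linarith
      nlinarith [mul_nonneg (pow_nonneg (sq_nonneg s) 2) h1s2,
        mul_nonneg (pow_nonneg (sq_nonneg s) 3) h1s2]
  rw [abs_le]
  constructor
  · have : 2 - s ^ 2 / 4 - s ^ 3 ≤ √(1 - s) + √(1 + s) := by
      refine le_of_sq_le_sq ?_ (by positivity)
      rw [hsq]
      nlinarith [pow_le_one₀ h0 h1 (n := 3), pow_nonneg h0 3, pow_nonneg h0 4]
    linarith
  · have : √(1 - s) + √(1 + s) ≤ 2 - s ^ 2 / 4 :=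
      le_of_sq_le_sq (by rw [hsq]; nlinarith [sq_nonneg (s ^ 2)]) (by linarith)
    linarith [pow_nonneg h0 3]

theorem sqrt_two_sub_add_sqrt_two_add (s : ℝ) :
    √(2 - 2 * s) + √(2 + 2 * s) = √2 * (√(1 - s) + √(1 + s)) := by
  rw [mul_add, ← Real.sqrt_mul zero_le_two, ← Real.sqrt_mul zero_le_two]
  ring_nf

theorem pow_rpow_eq_pow {x a : ℝ} {m n : ℕ} (hx : 0 ≤ x) (h : (m : ℝ) * a = n) :
    (x ^ m) ^ a = x ^ n := by
  rw [← Real.rpow_natCast, ← Real.rpow_mul hx, h, Real.rpow_natCast]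

namespace DeCaen

theorem sum_dist_eq {q s : ℝ} (hqs : q * s = 1 - s) :
    q ^ 4 * ((q ^ 4 / 2 - 1) * (√(2 - 2 * s) + √(2 + 2 * s)) + 2) - √2 * (q ^ 4) ^ 2
        + q ^ 6 / (4 * √2)
      = √2 * q ^ 4 * (q ^ 4 / 2 - 1) * (√(1 - s) + √(1 + s) - (2 - s ^ 2 / 4))
        + q ^ 4 * (2 - 2 * √2 + √2 * s ^ 2 / 4 + √2 * q ^ 2 * s * (1 + q * s) / 8) := by
  have hsqrt2 : √2 ^ 2 = 2 := Real.sq_sqrt zero_le_two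
  have hdiv : q ^ 6 / (4 * √2) = √2 * q ^ 6 / 8 := by
    field_simp
    linear_combination (-4 * q ^ 6) * hsqrt2
  rw [sqrt_two_sub_add_sqrt_two_add, hdiv]
  -- `1 - q²s² = (1 + qs)(1 - qs) = (1 + qs) s`
  linear_combination (-(√2 * q ^ 6 * (1 + q * s) / 8)) * hqs

theorem abs_taylor_term_le {q s e : ℝ} (hq : 1 ≤ q) (hs0 : 0 ≤ s) (hqs1 : q * s ≤ 1)
    (he : |e| ≤ s ^ 3) :
    |√2 * q ^ 4 * (q ^ 4 / 2 - 1) * e| ≤ q ^ 5 := by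
  have hq4 : 1 ≤ q ^ 4 := one_le_pow₀ hq
  have hsqrt2 : √2 ≤ 2 := by
    rw [Real.sqrt_le_left zero_le_two]; norm_num
  calc |√2 * q ^ 4 * (q ^ 4 / 2 - 1) * e| = √2 * q ^ 4 * |q ^ 4 / 2 - 1| * |e| := by
        rw [abs_mul, abs_mul, abs_mul, abs_of_nonneg (Real.sqrt_nonneg 2),
          abs_of_nonneg (by positivity : (0 : ℝ) ≤ q ^ 4)]
    _ ≤ √2 * q ^ 4 * (q ^ 4 / 2) * s ^ 3 := by
        gcongr
        rw [abs_le]; constructor <;> linarith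
    _ = √2 / 2 * q ^ 5 * (q * s) ^ 3 := by ring
    _ ≤ 1 * q ^ 5 * 1 := by
        gcongr
        · linarith
        · exact pow_le_one₀ (by positivity) hqs1
    _ = q ^ 5 := by ring

theorem abs_correction_term_le {q s : ℝ} (hq : 1 ≤ q) (hs0 : 0 ≤ s) (hs1 : s ≤ 1)
    (hqs1 : q * s ≤ 1) :
    |q ^ 4 * (2 - 2 * √2 + √2 * s ^ 2 / 4 + √2 * q ^ 2 * s * (1 + q * s) / 8)| ≤ 2 * q ^ 5 := by
  have hsqrt2 : √2 ≤ 3 / 2 := by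
    rw [Real.sqrt_le_left (by norm_num)]; norm_num
  have hsqrt2' : 1 ≤ √2 := by
    rw [Real.le_sqrt' one_pos]; norm_num
  have hqs0 : 0 ≤ q * s := by positivity
  have hs2_term : √2 * s ^ 2 / 4 ≤ 1 / 2 := by nlinarith [pow_le_one₀ hs0 hs1 (n := 2)]
  have hq_term : √2 * q ^ 2 * s * (1 + q * s) / 8 ≤ q / 2 := by
    have : √2 * (q * s) * (1 + q * s) / 8 ≤ 1 / 2 := by nlinarith [mul_nonneg hqs0 hqs0]
    calc √2 * q ^ 2 * s * (1 + q * s) / 8 = q * (√2 * (q * s) * (1 + q * s) / 8) := by ring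
      _ ≤ q / 2 := by nlinarith
  have hinner :
      |2 - 2 * √2 + √2 * s ^ 2 / 4 + √2 * q ^ 2 * s * (1 + q * s) / 8| ≤ 2 * q := by
    rw [abs_le]; constructor
    · nlinarith [show 0 ≤ √2 * q ^ 2 * s * (1 + q * s) / 8 by positivity, sq_nonneg s]
    · linarith
  calc _ = q ^ 4 * |2 - 2 * √2 + √2 * s ^ 2 / 4 + √2 * q ^ 2 * s * (1 + q * s) / 8| := by
        rw [abs_mul, abs_of_nonneg (by positivity)]
    _ ≤ q ^ 4 * (2 * q) := by gcongr
    _ = 2 * q ^ 5 := by ring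

theorem abs_sum_dist_error_le {q : ℝ} (hq : 1 ≤ q) :
    |q ^ 4 * ((q ^ 4 / 2 - 1) * (√(2 - 2 * (1 / (q + 1))) + √(2 + 2 * (1 / (q + 1)))) + 2)
        - √2 * (q ^ 4) ^ 2 + q ^ 6 / (4 * √2)| ≤ 3 * q ^ 5 := by
  set s := 1 / (q + 1) with hs
  have hs0 : 0 ≤ s := by positivity
  have hqs : q * s = 1 - s := by rw [hs]; field_simp; ring
  have hqs1 : q * s ≤ 1 := by linarith
  have hs1 : s ≤ 1 := by nlinarith
  rw [sum_dist_eq hqs]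
  calc _ ≤ _ := abs_add_le _ _
    _ ≤ q ^ 5 + 2 * q ^ 5 := add_le_add
        (abs_taylor_term_le hq hs0 hqs1 (abs_sqrt_one_sub_add_sqrt_one_add_sub_le hs0 hs1))
        (abs_correction_term_le hq hs0 hs1 hqs1)
    _ = 3 * q ^ 5 := by ring

end DeCaen

theorem deCaen_sum_dist_asymptotics :
    ∃ C : ℝ, 0 < C ∧ ∀ r : ℕ, 1 ≤ r →
      |(2 ^ (4 * r) : ℝ) *
          (((2 ^ (4 * r) : ℝ) / 2 - 1) *
              (Real.sqrt (2 - 2 * (1 / ((2 : ℝ) ^ r + 1)))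
                + Real.sqrt (2 + 2 * (1 / ((2 : ℝ) ^ r + 1)))) + 2)
        - Real.sqrt 2 * (2 ^ (4 * r) : ℝ) ^ 2
        + (2 ^ (4 * r) : ℝ) ^ ((3 : ℝ) / 2) / (4 * Real.sqrt 2)|
        ≤ C * (2 ^ (4 * r) : ℝ) ^ ((5 : ℝ) / 4) := by
  refine ⟨3, by norm_num, fun r _ => ?_⟩
  have hq : (1 : ℝ) ≤ 2 ^ r := one_le_pow₀ one_le_two
  have hN : (2 : ℝ) ^ (4 * r) = (2 ^ r) ^ 4 := by rw [← pow_mul, mul_comm]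
  rw [hN, pow_rpow_eq_pow (n := 6) (by positivity) (by norm_num),
    pow_rpow_eq_pow (n := 5) (by positivity) (by norm_num)]
  exact DeCaen.abs_sum_dist_error_le hq
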